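/- Let B be a Banach A-bimodule such that every continuous derivation D : A → B* satisfies D''(A**) ⊆ wap_ℓ(B). If every continuous derivation from A** into B*** is inner, then every continuous derivation from A into B* is inner. -/

import Mathlib

open ContinuousLinearMap NormedSpace

noncomputable section

namespace NormedSpace

/-- The topological dual `E →L[𝕜] 𝕜`, as `NormedSpace.Dual` was defined in the older Mathlib. -/
abbrev Dual (𝕜 : Type*) [NontriviallyNormedField 𝕜] (E : Type*) [SeminormedAddCommGroup E]
    [NormedSpace 𝕜 E] : Type _ :=
  E →L[𝕜] 𝕜

end NormedSpace

section Defs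

variable {X Y Z W : Type} [NormedAddCommGroup X] [NormedSpace ℝ X]
  [NormedAddCommGroup Y] [NormedSpace ℝ Y] [NormedAddCommGroup Z] [NormedSpace ℝ Z]
  [NormedAddCommGroup W] [NormedSpace ℝ W]

/-- The first adjoint `m^*` of a bounded bilinear map `m : X × Y → Z`,
as a map `Z^* × X → Y^*`, `⟨m^*(z',x), y⟩ = ⟨z', m(x,y)⟩`. -/
def adj1 (m : X →L[ℝ] Y →L[ℝ] Z) :
    Dual ℝ Z →L[ℝ] X →L[ℝ] Dual ℝ Y :=
  (((ContinuousLinearMap.compL ℝ X (Y →L[ℝ] Z) (Dual ℝ Y)).flip m).comp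
    (ContinuousLinearMap.compL ℝ Y Z ℝ))

@[simp] lemma adj1_apply (m : X →L[ℝ] Y →L[ℝ] Z) (z' : Dual ℝ Z) (x : X) (y : Y) :
    adj1 m z' x y = z' (m x y) := rfl

/-- The first (left) Arens extension `m^{***} : X^{**} × Y^{**} → Z^{**}` of a
bounded bilinear map `m : X × Y → Z`. -/
def arens (m : X →L[ℝ] Y →L[ℝ] Z) :
    Dual ℝ (Dual ℝ X) →L[ℝ] Dual ℝ (Dual ℝ Y) →L[ℝ] Dual ℝ (Dual ℝ Z) :=
  adj1 (adj1 (adj1 m))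

/-- The adjoint (dual map) of a bounded linear map. -/
def dualMap' (D : X →L[ℝ] Y) : Dual ℝ Y →L[ℝ] Dual ℝ X :=
  (ContinuousLinearMap.compL ℝ X Y ℝ).flip D

@[simp] lemma dualMap'_apply (D : X →L[ℝ] Y) (g : Dual ℝ Y) (x : X) :
    dualMap' D g x = g (D x) := rfl

/-- The second adjoint `D'' : X^{**} → Y^{**}` of a bounded linear map. -/
def bidualMap (D : X →L[ℝ] Y) : Dual ℝ (Dual ℝ X) →L[ℝ] Dual ℝ (Dual ℝ Y) :=
  dualMap' (dualMap' D)

/-- Given an action `t : A × X → X`, the transposed action on the dual `X^*`: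
`(dualAct t) a f = f ∘ (t a)`. -/
def dualAct (t : W →L[ℝ] X →L[ℝ] X) : W →L[ℝ] Dual ℝ X →L[ℝ] Dual ℝ X :=
  ((ContinuousLinearMap.compL ℝ X X ℝ).flip).comp t

@[simp] lemma dualAct_apply (t : W →L[ℝ] X →L[ℝ] X) (a : W) (f : Dual ℝ X) (x : X) :
    dualAct t a f x = f (t a x) := rfl

/-- `D : A → X` is a derivation with respect to the multiplication `mul'` on `A`
and the left action `l` and right action `r` (`r a x` means `x · a`) of `A` on `X`. -/
def IsDer {A' : Type} [NormedAddCommGroup A'] [NormedSpace ℝ A']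
    (mul' : A' →L[ℝ] A' →L[ℝ] A') (l r : A' →L[ℝ] X →L[ℝ] X) (D : A' →L[ℝ] X) : Prop :=
  ∀ a b : A', D (mul' a b) = l a (D b) + r b (D a)

/-- `D : A → X` is an inner derivation: `D a = a·x - x·a` for some `x`. -/
def IsInner {A' : Type} [NormedAddCommGroup A'] [NormedSpace ℝ A']
    (l r : A' →L[ℝ] X →L[ℝ] X) (D : A' →L[ℝ] X) : Prop :=
  ∃ x : X, ∀ a : A', D a = l a x - r a x

/-- The bimodule axioms for actions `l`, `r` of an algebra with multiplication `mul'`. -/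
def IsBimod {A' : Type} [NormedAddCommGroup A'] [NormedSpace ℝ A']
    (mul' : A' →L[ℝ] A' →L[ℝ] A') (l r : A' →L[ℝ] X →L[ℝ] X) : Prop :=
  (∀ a b x, l (mul' a b) x = l a (l b x)) ∧
  (∀ a b x, r (mul' a b) x = r b (r a x)) ∧
  (∀ a b x, l a (r b x) = r b (l a x))

/-- weak*-to-weak* continuity of a map between dual spaces. -/
def WStarCont (f : Dual ℝ X → Dual ℝ Y) : Prop :=
  ∀ y : Y, Continuous fun φ : WeakDual ℝ X => f φ y

end Defs

/-- A packaged Banach `A`-bimodule (used to form iterated duals). -/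
structure ModPk (A : Type) [NormedAddCommGroup A] [NormedSpace ℝ A] : Type 1 where
  X : Type
  [grp : NormedAddCommGroup X]
  [mod : NormedSpace ℝ X]
  l : A →L[ℝ] X →L[ℝ] X
  r : A →L[ℝ] X →L[ℝ] X

attribute [instance] ModPk.grp ModPk.mod

variable {A : Type} [NormedAddCommGroup A] [NormedSpace ℝ A]

/-- The canonical dual of a packaged bimodule. -/
def ModPk.dual (P : ModPk A) : ModPk A :=
  ⟨Dual ℝ P.X, dualAct P.r, dualAct P.l⟩

/-- The `n`-th iterated dual of a packaged bimodule. -/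
def ModPk.iter (P : ModPk A) : ℕ → ModPk A
  | 0 => P
  | n+1 => (P.iter n).dual

/-- A "level": an algebra (given by its bilinear multiplication) together with a bimodule. -/
structure Lvl : Type 1 where
  Alg : Type
  [g1 : NormedAddCommGroup Alg]
  [m1 : NormedSpace ℝ Alg]
  Mod : Type
  [g2 : NormedAddCommGroup Mod]
  [m2 : NormedSpace ℝ Mod]
  mul : Alg →L[ℝ] Alg →L[ℝ] Alg
  l : Alg →L[ℝ] Mod →L[ℝ] Mod
  r : Alg →L[ℝ] Mod →L[ℝ] Mod

attribute [instance] Lvl.g1 Lvl.m1 Lvl.g2 Lvl.m2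

/-- Passing to second duals: `A^{**}` with the first Arens product, acting on `B^{**}`
via the Arens extensions `π_ℓ^{***}` and `π_r^{***}` of the module actions. -/
def Lvl.double (Q : Lvl) : Lvl where
  Alg := Dual ℝ (Dual ℝ Q.Alg)
  Mod := Dual ℝ (Dual ℝ Q.Mod)
  mul := arens Q.mul
  l := arens Q.l
  r := (arens Q.r.flip).flip

/-- Iterated even duals: `Lvl.iter Q n` is the level `(A^{(2n)}, B^{(2n)})`. -/
def Lvl.iter (Q : Lvl) : ℕ → Lvl
  | 0 => Q
  | n+1 => (Q.iter n).double

/-- The canonical embedding `A → A^{(2n)}`. -/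
def Lvl.embA (Q : Lvl) : (n : ℕ) → Q.Alg →L[ℝ] (Q.iter n).Alg
  | 0 => ContinuousLinearMap.id ℝ _
  | n+1 => (inclusionInDoubleDual ℝ ((Q.iter n).Alg)).comp (Q.embA n)

/-- The canonical embedding `B → B^{(2n)}`. -/
def Lvl.embM (Q : Lvl) : (n : ℕ) → Q.Mod →L[ℝ] (Q.iter n).Mod
  | 0 => ContinuousLinearMap.id ℝ _
  | n+1 => (inclusionInDoubleDual ℝ ((Q.iter n).Mod)).comp (Q.embM n)

/-- The left-topological-center condition `Z^ℓ_{A^{(2n+2)}}(B^{(2n+2)}) = B^{(2n+2)}`,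
stated at the double of a level `Q`: for each `b` in the second-dual module, the map
`a ↦ b·a` is weak*-to-weak* continuous. -/
def Lvl.doubleZl (Q : Lvl) : Prop :=
  ∀ b : (Q.double).Mod, WStarCont (X := Dual ℝ Q.Alg) (Y := Dual ℝ Q.Mod)
    (fun a => (Q.double).r a b)

/-- The base level of a Banach algebra `A` with a Banach `A`-bimodule `B`. -/
def lvlOf (A : Type) [NormedRing A] [NormedAlgebra ℝ A]
    (B : Type) [NormedAddCommGroup B] [NormedSpace ℝ B]
    (l r : A →L[ℝ] B →L[ℝ] B) : Lvl :=
  Lvl.mk A B (ContinuousLinearMap.mul ℝ A) l r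

/-!
Let `D : A → B*` be a derivation with `D''(A**) ⊆ wap_ℓ(B)`. For `F, G ∈ A**`, evaluating
`D''(F □ G)` on `x ∈ B` and expanding `D(ab) = a·Db + Da·b` gives
`D''(F □ G) = F · D''G + D''F · G` as functionals on `B`. The term `F · D''G` always lies in
`B*`, and `D''F · G` does because `D''F ∈ wap_ℓ(B)`; so both sides lie in `B*` and agree, and
`D''` is a derivation `A** → B***`. By hypothesis `D'' = ad Ξ`, and restricting `Ξ` to `B`
gives `D = ad (Ξ|_B)`, since `D''` extends `D` and the Arens actions extend those of `A` on `B`.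
-/

section Derivation

variable {B : Type} [NormedAddCommGroup B] [NormedSpace ℝ B]

local notation "ι" => inclusionInDoubleDual ℝ

/-- `wap_ℓ(B)`. -/
def wapLeft (l : A →L[ℝ] B →L[ℝ] B) : Set (Dual ℝ B) :=
  {b' | ∀ (F : Dual ℝ (Dual ℝ A)) (G : Dual ℝ (Dual ℝ B)), arens l F G b' = arens l.flip G F b'}

lemma dualAct_arens_flip_flip_inclusion (r : A →L[ℝ] B →L[ℝ] B) (F : Dual ℝ (Dual ℝ A))
    (b' : Dual ℝ B) :
    dualAct (X := Dual ℝ (Dual ℝ B)) (arens r.flip).flip F (ι (Dual ℝ B) b')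
      = ι (Dual ℝ B) (F.comp (adj1 r.flip b')) :=
  rfl

/-- In general `b' · G` is only in `B***`; weak almost periodicity of `b'` puts it back in `B*`. -/
lemma dualAct_arens_inclusion_of_mem_wapLeft {l : A →L[ℝ] B →L[ℝ] B} {b' : Dual ℝ B}
    (hb' : b' ∈ wapLeft l) (G : Dual ℝ (Dual ℝ A)) :
    dualAct (X := Dual ℝ (Dual ℝ B)) (arens l) G (ι (Dual ℝ B) b')
      = ι (Dual ℝ B) (G.comp (adj1 l.flip b')) := by
  ext H
  exact hb' G H

variable {mul : A →L[ℝ] A →L[ℝ] A} {l r : A →L[ℝ] B →L[ℝ] B} {D : A →L[ℝ] Dual ℝ B}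

lemma bidualMap_arens_apply_inclusion (hD : IsDer mul (dualAct r) (dualAct l) D)
    {F G : Dual ℝ (Dual ℝ A)} {bF bG : Dual ℝ B}
    (hF : bidualMap D F = ι (Dual ℝ B) bF) (hG : bidualMap D G = ι (Dual ℝ B) bG) (x : B) :
    bidualMap D (arens mul F G) (ι B x) = F (adj1 r.flip bG x) + G (adj1 l.flip bF x) := by
  have hsplit : adj1 (adj1 mul) G (dualMap' D (ι B x))
      = adj1 r.flip bG x + dualMap' D (G.comp ((adj1 l.flip).flip x)) := by
    ext a
    have hDx : adj1 mul (dualMap' D (ι B x)) a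
        = dualMap' D (ι B (r a x)) + adj1 l.flip (D a) x := by
      ext b
      exact congr($(hD a b) x)
    change G (adj1 mul (dualMap' D (ι B x)) a) = _
    rw [hDx, map_add]
    congr 1
    exact congr($hG (ι B (r a x)))
  calc bidualMap D (arens mul F G) (ι B x) = F (adj1 (adj1 mul) G (dualMap' D (ι B x))) := rfl
    _ = F (adj1 r.flip bG x) + bidualMap D F (G.comp ((adj1 l.flip).flip x)) := by
      rw [hsplit, map_add]
      rfl
    _ = F (adj1 r.flip bG x) + G (adj1 l.flip bF x) := by
      rw [hF]
      rfl

lemma isDer_bidualMap (hD : IsDer mul (dualAct r) (dualAct l) D)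
    (hwap : ∀ F : Dual ℝ (Dual ℝ A), ∃ b', bidualMap D F = ι (Dual ℝ B) b' ∧ b' ∈ wapLeft l) :
    IsDer (arens mul)
      (dualAct (W := Dual ℝ (Dual ℝ A)) (X := Dual ℝ (Dual ℝ B)) (arens r.flip).flip)
      (dualAct (X := Dual ℝ (Dual ℝ B)) (arens l)) (bidualMap D) := by
  intro F G
  obtain ⟨bF, hF, hbF⟩ := hwap F
  obtain ⟨bG, hG, -⟩ := hwap G
  obtain ⟨bFG, hFG, -⟩ := hwap (arens mul F G)
  have hbFG : bFG = F.comp (adj1 r.flip bG) + G.comp (adj1 l.flip bF) := by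
    ext x
    have hx := bidualMap_arens_apply_inclusion hD hF hG x
    rwa [hFG] at hx
  rw [hFG, hF, hG, dualAct_arens_flip_flip_inclusion, dualAct_arens_inclusion_of_mem_wapLeft hbF,
    hbFG, map_add]

lemma IsInner.of_bidualMap
    (h : IsInner (dualAct (W := Dual ℝ (Dual ℝ A)) (X := Dual ℝ (Dual ℝ B)) (arens r.flip).flip)
      (dualAct (X := Dual ℝ (Dual ℝ B)) (arens l)) (bidualMap D)) :
    IsInner (dualAct r) (dualAct l) D := by
  obtain ⟨Ξ, hΞ⟩ := h
  refine ⟨Ξ.comp (ι B), fun a => ?_⟩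
  ext x
  exact congr($(hΞ (ι A a)) (ι B x))

end Derivation

theorem stmt10 (A : Type) [NormedRing A] [NormedAlgebra ℝ A]
    (B : Type) [NormedAddCommGroup B] [NormedSpace ℝ B]
    (l r : A →L[ℝ] B →L[ℝ] B)
    -- every continuous derivation `A → B*` satisfies `D''(A**) ⊆ wap_ℓ(B)`
    (hwap : ∀ D : A →L[ℝ] Dual ℝ B,
      IsDer (ContinuousLinearMap.mul ℝ A) (dualAct r) (dualAct l) D →
      ∀ F : Dual ℝ (Dual ℝ A), ∃ b' : Dual ℝ B,
        bidualMap D F = inclusionInDoubleDual ℝ (Dual ℝ B) b' ∧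
        -- `b' ∈ wap_ℓ(B)`: the two Arens extensions of the left action agree against `b'`
        ∀ (F' : Dual ℝ (Dual ℝ A)) (G : Dual ℝ (Dual ℝ B)),
          arens l F' G b' = arens l.flip G F' b')
    -- `H¹(A**, B***) = 0`
    (hcoh : ∀ D2 : Dual ℝ (Dual ℝ A) →L[ℝ] Dual ℝ (Dual ℝ (Dual ℝ B)),
      IsDer (arens (ContinuousLinearMap.mul ℝ A))
        (dualAct (W := Dual ℝ (Dual ℝ A)) (X := Dual ℝ (Dual ℝ B)) ((arens r.flip).flip))
        (dualAct (W := Dual ℝ (Dual ℝ A)) (X := Dual ℝ (Dual ℝ B)) (arens l)) D2 →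
      IsInner
        (dualAct (W := Dual ℝ (Dual ℝ A)) (X := Dual ℝ (Dual ℝ B)) ((arens r.flip).flip))
        (dualAct (W := Dual ℝ (Dual ℝ A)) (X := Dual ℝ (Dual ℝ B)) (arens l)) D2) :
    -- `H¹(A, B*) = 0`
    ∀ D : A →L[ℝ] Dual ℝ B,
      IsDer (ContinuousLinearMap.mul ℝ A) (dualAct r) (dualAct l) D →
      IsInner (dualAct r) (dualAct l) D :=
  fun D hD => IsInner.of_bidualMap (hcoh _ (isDer_bidualMap hD (hwap D hD)))
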